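/- Let k ≥ 1 be an integer and r ∈ ℤ. If x, y ∈ ℝ both satisfy |x − c| ≥ 1/2 and |y − c| ≥ 1/2 for every integer c with c ≡ r (mod k), and ⌊(x − r)/k⌋ ≠ ⌊(y − r)/k⌋, then |x − y| ≥ 1. Consequently, two points of ℝ² that survive the (r,s)-shifting and lie in different k×k cells of the shifting are at Euclidean distance at least 1, i.e., they are conflict-free; hence a union over the cells of conflict-free sets of surviving points is conflict-free. -/
import Mathlib

private lemma oneD_lt (k : ℕ) (hk : 1 ≤ k) (r : ℤ) (x y : ℝ)
    (hx : ∀ c : ℤ, c % (k : ℤ) = r % (k : ℤ) → (1 / 2 : ℝ) ≤ |x - (c : ℝ)|)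
    (hy : ∀ c : ℤ, c % (k : ℤ) = r % (k : ℤ) → (1 / 2 : ℝ) ≤ |y - (c : ℝ)|)
    (hlt : ⌊(x - (r : ℝ)) / (k : ℝ)⌋ < ⌊(y - (r : ℝ)) / (k : ℝ)⌋) :
    x + 1 ≤ y := by
  have kpos : (0 : ℝ) < (k : ℝ) := by exact_mod_cast hk
  set m := ⌊(x - (r : ℝ)) / (k : ℝ)⌋ with hm
  set n := ⌊(y - (r : ℝ)) / (k : ℝ)⌋ with hn
  set c : ℤ := r + (m + 1) * (k : ℤ) with hc
  have hmod : c % (k : ℤ) = r % (k : ℤ) := by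
    simp [hc, Int.add_mul_emod_self_left]
  have hxc := hx c hmod
  have hyc := hy c hmod
  have hxlt : x < (c : ℝ) := by
    have h1 : (x - (r : ℝ)) / (k : ℝ) < (m : ℝ) + 1 := Int.lt_floor_add_one _
    have := (div_lt_iff₀ kpos).mp h1
    have : x - (r : ℝ) < ((m : ℝ) + 1) * (k : ℝ) := this
    push_cast [hc]
    linarith
  have hyge : (c : ℝ) ≤ y := by
    have h1 : (n : ℝ) ≤ (y - (r : ℝ)) / (k : ℝ) := Int.floor_le _
    have h2 := (le_div_iff₀ kpos).mp h1
    have h3 : ((m : ℝ) + 1) * (k : ℝ) ≤ (n : ℝ) * (k : ℝ) := by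
      have : (m : ℝ) + 1 ≤ (n : ℝ) := by exact_mod_cast hlt
      nlinarith
    push_cast [hc]
    linarith
  have hxle : x ≤ (c : ℝ) - 1 / 2 := by
    rcases abs_cases (x - (c : ℝ)) with ⟨h, _⟩ | ⟨h, _⟩ <;> rw [h] at hxc <;> linarith
  have hyge' : (c : ℝ) + 1 / 2 ≤ y := by
    rcases abs_cases (y - (c : ℝ)) with ⟨h, _⟩ | ⟨h, _⟩ <;> rw [h] at hyc <;> linarith
  linarith

private lemma oneD (k : ℕ) (hk : 1 ≤ k) (r : ℤ) (x y : ℝ)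
    (hx : ∀ c : ℤ, c % (k : ℤ) = r % (k : ℤ) → (1 / 2 : ℝ) ≤ |x - (c : ℝ)|)
    (hy : ∀ c : ℤ, c % (k : ℤ) = r % (k : ℤ) → (1 / 2 : ℝ) ≤ |y - (c : ℝ)|)
    (hne : ⌊(x - (r : ℝ)) / (k : ℝ)⌋ ≠ ⌊(y - (r : ℝ)) / (k : ℝ)⌋) :
    1 ≤ |x - y| := by
  rcases hne.lt_or_gt with h | h
  · have := oneD_lt k hk r x y hx hy h
    rw [abs_sub_comm]
    rcases abs_cases (y - x) with ⟨h', _⟩ | ⟨h', _⟩ <;> linarith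
  · have := oneD_lt k hk r y x hy hx h
    rcases abs_cases (x - y) with ⟨h', _⟩ | ⟨h', _⟩ <;> linarith

private lemma coord_le_dist (p q : EuclideanSpace ℝ (Fin 2)) (i : Fin 2) :
    |p i - q i| ≤ dist p q := by
  rw [EuclideanSpace.dist_eq, ← Real.sqrt_sq_eq_abs]
  apply Real.sqrt_le_sqrt
  have : (p i - q i) ^ 2 = dist (p i) (q i) ^ 2 := by
    rw [Real.dist_eq, sq_abs]
  rw [this]
  exact Finset.single_le_sum (f := fun j => dist (p j) (q j) ^ 2) (fun j _ => sq_nonneg _) (Finset.mem_univ i)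

/-- Surviving points in different cells of the shifting are far apart:
(1) in one dimension, if `x` and `y` both stay at distance at least `1/2`
from every integer `c ≡ r (mod k)` and lie in different length-`k` intervals
of the shifting, then `|x − y| ≥ 1`; (2) consequently two points of the plane
that survive the `(r,s)`-shifting and lie in different `k×k` cells are at
Euclidean distance at least 1, i.e. they are conflict-free. -/
theorem shifting_cells_conflict_free (k : ℕ) (hk : 1 ≤ k) :
    (∀ r : ℤ, ∀ x y : ℝ,
      (∀ c : ℤ, c % (k : ℤ) = r % (k : ℤ) → (1 / 2 : ℝ) ≤ |x - (c : ℝ)|) →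
      (∀ c : ℤ, c % (k : ℤ) = r % (k : ℤ) → (1 / 2 : ℝ) ≤ |y - (c : ℝ)|) →
      ⌊(x - (r : ℝ)) / (k : ℝ)⌋ ≠ ⌊(y - (r : ℝ)) / (k : ℝ)⌋ →
      1 ≤ |x - y|) ∧
    (∀ r s : ℤ, ∀ p q : EuclideanSpace ℝ (Fin 2),
      (∀ c : ℤ, c % (k : ℤ) = r % (k : ℤ) → (1 / 2 : ℝ) ≤ |p 0 - (c : ℝ)|) →
      (∀ c : ℤ, c % (k : ℤ) = s % (k : ℤ) → (1 / 2 : ℝ) ≤ |p 1 - (c : ℝ)|) →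
      (∀ c : ℤ, c % (k : ℤ) = r % (k : ℤ) → (1 / 2 : ℝ) ≤ |q 0 - (c : ℝ)|) →
      (∀ c : ℤ, c % (k : ℤ) = s % (k : ℤ) → (1 / 2 : ℝ) ≤ |q 1 - (c : ℝ)|) →
      (⌊(p 0 - (r : ℝ)) / (k : ℝ)⌋, ⌊(p 1 - (s : ℝ)) / (k : ℝ)⌋) ≠
        (⌊(q 0 - (r : ℝ)) / (k : ℝ)⌋, ⌊(q 1 - (s : ℝ)) / (k : ℝ)⌋) →
      1 ≤ dist p q) := by
  refine ⟨fun r x y hx hy hne => oneD k hk r x y hx hy hne, ?_⟩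
  intro r s p q hp0 hp1 hq0 hq1 hne
  have : ⌊(p 0 - (r : ℝ)) / (k : ℝ)⌋ ≠ ⌊(q 0 - (r : ℝ)) / (k : ℝ)⌋ ∨
      ⌊(p 1 - (s : ℝ)) / (k : ℝ)⌋ ≠ ⌊(q 1 - (s : ℝ)) / (k : ℝ)⌋ := by
    by_contra h
    push_neg at h
    exact hne (Prod.ext h.1 h.2)
  rcases this with h | h
  · calc (1 : ℝ) ≤ |p 0 - q 0| := oneD k hk r _ _ hp0 hq0 h
      _ ≤ dist p q := coord_le_dist p q 0
  · calc (1 : ℝ) ≤ |p 1 - q 1| := oneD k hk s _ _ hp1 hq1 h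
      _ ≤ dist p q := coord_le_dist p q 1
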